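/- arXiv:1710.09844 — 2 statements merged into one kernel-verified Lean document; each statement's English description precedes it below -/
import Mathlib

section
/- If every record in δ has its del flag false and dom(δ) is disjoint from dom(Δ), then δ ▷ Δ = δ ∪ Δ. -/
structure Rec where
  id : ℕ
  del : Bool

def dom (S : Set Rec) : Set ℕ := {i | ∃ r ∈ S, r.id = i}

def flush (δ Δ : Set Rec) : Set Rec :=
  {r | (r.id ∉ dom δ ∧ r ∈ Δ) ∨ (r ∈ δ ∧ r.del = false)}

theorem flush_disjoint_union (δ Δ : Set Rec)
    (hdel : ∀ r ∈ δ, r.del = false)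
    (hdisj : dom δ ∩ dom Δ = ∅) :
    flush δ Δ = δ ∪ Δ := by
  ext r
  constructor
  · rintro (⟨_, h⟩ | ⟨h, _⟩)
    · exact Or.inr h
    · exact Or.inl h
  · rintro (h | h)
    · exact Or.inr ⟨h, hdel r h⟩
    · left
      refine ⟨fun hd => ?_, h⟩
      have : r.id ∈ dom δ ∩ dom Δ := ⟨hd, ⟨r, h, rfl⟩⟩
      rw [hdisj] at this
      exact this
end

section
/- If dom is injective on Δ (all records in Δ have distinct ids) and injective on δ (all records in δ have distinct ids), then dom is injective on δ ▷ Δ, i.e. all records in δ ▷ Δ have distinct ids. -/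
def uniqueIds (S : Set Rec) : Prop :=
  ∀ r₁ ∈ S, ∀ r₂ ∈ S, r₁.id = r₂.id → r₁ = r₂

theorem flush_uniqueIds (δ Δ : Set Rec)
    (hΔ : uniqueIds Δ) (hδ : uniqueIds δ) :
    uniqueIds (flush δ Δ) := by
  rintro r₁ (⟨h1,h1'⟩|⟨h1,_⟩) r₂ (⟨h2,h2'⟩|⟨h2,_⟩) hid
  · exact hΔ r₁ h1' r₂ h2' hid
  · exact absurd ⟨r₂, h2, hid.symm⟩ h1
  · exact absurd ⟨r₁, h1, hid⟩ h2
  · exact hδ r₁ h1 r₂ h2 hid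
end
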